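/- Let ψ : ℝ³ → ℝ be a C³ harmonic function (Δψ = 0), let a : ℝ → ℝ be differentiable, and set u(x,t) = a(t)∇ψ(x) and p(x,t) = −a'(t)ψ(x) − ½a(t)²|∇ψ(x)|². Then (u, p) satisfies the Navier–Stokes equations pointwise: ∂_t u − Δu + (u·∇)u + ∇p = 0 and div u = 0. -/

import Mathlib

/-!
Since `ψ` is harmonic, so is each `∂ᵢψ` (third derivatives commute), hence `Δu = 0`, and
`div u = a Δψ = 0`. By symmetry of the Hessian the convective term of a gradient field is itself a
gradient, `(∇ψ · ∇) ∇ψ = ∇ (½ |∇ψ|²)`, while `∂ₜu = ∇ (a' ψ)`; the pressure `p` is chosen to cancel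
both.
-/

section

variable {E F : Type*} [NormedAddCommGroup E] [NormedSpace ℝ E]
  [NormedAddCommGroup F] [NormedSpace ℝ F]

theorem ContDiff.fderiv_apply_const {f : E → F} {m n : WithTop ℕ∞} (hf : ContDiff ℝ n f)
    (hmn : m + 1 ≤ n) (v : E) : ContDiff ℝ m (fun y => fderiv ℝ f y v) :=
  (hf.fderiv_right hmn).clm_apply contDiff_const

theorem ContDiff.differentiable_fderiv_apply_const {f : E → F} {n : WithTop ℕ∞}
    (hf : ContDiff ℝ n f) (hn : 2 ≤ n) (v : E) : Differentiable ℝ (fun y => fderiv ℝ f y v) :=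
  (hf.fderiv_apply_const (m := 1) hn v).differentiable one_ne_zero

theorem fderiv_fderiv_apply_comm {f : E → F} (hf : ContDiff ℝ 2 f) (x v w : E) :
    fderiv ℝ (fun y => fderiv ℝ f y v) x w = fderiv ℝ (fun y => fderiv ℝ f y w) x v := by
  have hd : DifferentiableAt ℝ (fderiv ℝ f) x :=
    (hf.fderiv_right (m := 1) le_rfl).differentiable one_ne_zero x
  rw [fderiv_clm_apply hd (differentiableAt_const v),
    fderiv_clm_apply hd (differentiableAt_const w)]
  simpa using (hf.contDiffAt.isSymmSndFDerivAt (by simp)).eq w v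

theorem fderiv_const_mul_apply (c : ℝ) (g : E → ℝ) (x v : E) :
    fderiv ℝ (fun y => c * g y) x v = c * fderiv ℝ g x v :=
  congr($(fderiv_const_smul_field (𝕜 := ℝ) c (f := g)) x v)

variable {ι : Type*} [Fintype ι] (e : ι → E)

noncomputable def laplacianAlong (f : E → ℝ) (x : E) : ℝ :=
  ∑ j, fderiv ℝ (fun y => fderiv ℝ f y (e j)) x (e j)

theorem laplacianAlong_fderiv_apply {f : E → ℝ} (hf : ContDiff ℝ 3 f) (v x : E) :
    laplacianAlong e (fun y => fderiv ℝ f y v) x = fderiv ℝ (laplacianAlong e f) x v := by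
  have hpartial : ∀ j, ContDiff ℝ 2 (fun y => fderiv ℝ f y (e j)) :=
    fun j => hf.fderiv_apply_const (by norm_num) (e j)
  unfold laplacianAlong
  rw [fderiv_fun_sum fun j _ => (hpartial j).differentiable_fderiv_apply_const le_rfl (e j) x,
    sum_apply]
  refine Finset.sum_congr rfl fun j _ => ?_
  have hswap : (fun y => fderiv ℝ (fun z => fderiv ℝ f z v) y (e j))
      = fun y => fderiv ℝ (fun z => fderiv ℝ f z (e j)) y v :=
    funext fun y => fderiv_fderiv_apply_comm (hf.of_le (by norm_num)) y v (e j)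
  rw [hswap, fderiv_fderiv_apply_comm (hpartial j)]

theorem fderiv_sum_sq_fderiv_apply {f : E → ℝ} (hf : ContDiff ℝ 2 f) (x v : E) :
    fderiv ℝ (fun y => ∑ j, fderiv ℝ f y (e j) ^ 2) x v
      = 2 * ∑ j, fderiv ℝ f x (e j) * fderiv ℝ (fun y => fderiv ℝ f y v) x (e j) := by
  have hdiff : ∀ j, DifferentiableAt ℝ (fun y => fderiv ℝ f y (e j)) x :=
    fun j => hf.differentiable_fderiv_apply_const le_rfl (e j) x
  rw [fderiv_fun_sum (A := fun j y => fderiv ℝ f y (e j) ^ 2) fun j _ => (hdiff j).pow 2,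
    sum_apply, Finset.mul_sum]
  refine Finset.sum_congr rfl fun j _ => ?_
  rw [fderiv_fun_pow 2 (hdiff j), fderiv_fderiv_apply_comm hf x v (e j)]
  simp only [smul_apply, nsmul_eq_mul, smul_eq_mul]
  ring

end

theorem potential_like_solution_general (ψ : (Fin 3 → ℝ) → ℝ) (hψ : ContDiff ℝ 3 ψ)
    (hharm : ∀ x : Fin 3 → ℝ,
      ∑ j : Fin 3,
        fderiv ℝ (fun y => fderiv ℝ ψ y (Pi.single j 1)) x (Pi.single j 1) = 0)
    (a : ℝ → ℝ)
    (u : Fin 3 → (Fin 3 → ℝ) → ℝ → ℝ) (p : (Fin 3 → ℝ) → ℝ → ℝ)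
    (hu : ∀ i x t, u i x t = a t * fderiv ℝ ψ x (Pi.single i 1))
    (hp : ∀ x t, p x t = -(deriv a t) * ψ x -
      (1 / 2) * (a t) ^ 2 * ∑ j : Fin 3, (fderiv ℝ ψ x (Pi.single j 1)) ^ 2) :
    (∀ (i : Fin 3) (x : Fin 3 → ℝ) (t : ℝ),
        deriv (fun s => u i x s) t -
          (∑ j : Fin 3,
            fderiv ℝ (fun y => fderiv ℝ (fun z => u i z t) y (Pi.single j 1)) x
              (Pi.single j 1)) +
          (∑ j : Fin 3, u j x t * fderiv ℝ (fun y => u i y t) x (Pi.single j 1)) +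
          fderiv ℝ (fun y => p y t) x (Pi.single i 1) = 0) ∧
    (∀ (x : Fin 3 → ℝ) (t : ℝ),
        ∑ i : Fin 3, fderiv ℝ (fun y => u i y t) x (Pi.single i 1) = 0) := by
  obtain rfl : u = fun i x t => a t * fderiv ℝ ψ x (Pi.single i 1) :=
    funext fun i => funext₂ (hu i)
  obtain rfl : p = fun x t => -(deriv a t) * ψ x -
      1 / 2 * a t ^ 2 * ∑ j : Fin 3, fderiv ℝ ψ x (Pi.single j 1) ^ 2 :=
    funext₂ hp
  refine ⟨fun i x t => ?_, fun x t => ?_⟩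
  · have hlap : ∑ j : Fin 3, fderiv ℝ (fun y => fderiv ℝ (fun z => fderiv ℝ ψ z (Pi.single i 1))
        y (Pi.single j 1)) x (Pi.single j 1) = 0 := by
      change laplacianAlong (fun j => Pi.single j 1) _ x = 0
      rw [laplacianAlong_fderiv_apply _ hψ, show laplacianAlong _ ψ = 0 from funext hharm]
      simp
    have hψd : DifferentiableAt ℝ ψ x := hψ.differentiable (by norm_num) x
    have hsqd : DifferentiableAt ℝ (fun y => ∑ j : Fin 3, fderiv ℝ ψ y (Pi.single j 1) ^ 2) x := by
      have hpartial := fun j : Fin 3 => hψ.differentiable_fderiv_apply_const (by norm_num) (Pi.single j 1)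
      fun_prop
    simp only [deriv_mul_const_field, fderiv_const_mul_apply]
    rw [fderiv_fun_sub (hψd.const_mul _) (hsqd.const_mul _)]
    simp only [sub_apply, fderiv_const_mul_apply,
      fderiv_sum_sq_fderiv_apply _ (hψ.of_le (by norm_num))]
    simp only [← Finset.mul_sum, hlap, mul_mul_mul_comm (a t)]
    ring
  · simp only [fderiv_const_mul_apply]
    rw [← Finset.mul_sum, hharm x, mul_zero]

theorem potential_like_solution (ψ : (Fin 3 → ℝ) → ℝ) (hψ : ContDiff ℝ 3 ψ)
    (hharm : ∀ x : Fin 3 → ℝ,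
      ∑ j : Fin 3,
        fderiv ℝ (fun y => fderiv ℝ ψ y (Pi.single j 1)) x (Pi.single j 1) = 0)
    (a : ℝ → ℝ) (ha : Differentiable ℝ a)
    (u : Fin 3 → (Fin 3 → ℝ) → ℝ → ℝ) (p : (Fin 3 → ℝ) → ℝ → ℝ)
    (hu : ∀ i x t, u i x t = a t * fderiv ℝ ψ x (Pi.single i 1))
    (hp : ∀ x t, p x t = -(deriv a t) * ψ x -
      (1 / 2) * (a t) ^ 2 * ∑ j : Fin 3, (fderiv ℝ ψ x (Pi.single j 1)) ^ 2) :
    (∀ (i : Fin 3) (x : Fin 3 → ℝ) (t : ℝ),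
        deriv (fun s => u i x s) t -
          (∑ j : Fin 3,
            fderiv ℝ (fun y => fderiv ℝ (fun z => u i z t) y (Pi.single j 1)) x
              (Pi.single j 1)) +
          (∑ j : Fin 3, u j x t * fderiv ℝ (fun y => u i y t) x (Pi.single j 1)) +
          fderiv ℝ (fun y => p y t) x (Pi.single i 1) = 0) ∧
    (∀ (x : Fin 3 → ℝ) (t : ℝ),
        ∑ i : Fin 3, fderiv ℝ (fun y => u i y t) x (Pi.single i 1) = 0) :=
  potential_like_solution_general ψ hψ hharm a u p hu hp
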